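/- arXiv:1710.10416 — 2 statements merged into one kernel-verified Lean document; each statement's English description precedes it below -/
import Mathlib

section
/- Let β₀, β̂ ∈ ℝ^p, let T₀ = {j : β₀ʲ ≠ 0}, and let γ > 0. If ‖β̂ − β₀‖_∞ ≤ γ and min_{j ∈ T₀} |β₀ʲ| > 2γ, then the thresholded set T̂ = {j : |β̂ʲ| > γ} equals T₀. -/
/-- Variable selection consistency: thresholding recovers the true support. -/
theorem threshold_selects_support (p : ℕ) (β₀ βhat : Fin p → ℝ) (γ : ℝ) (hγ : 0 < γ)
    (hclose : ∀ j, |βhat j - β₀ j| ≤ γ)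
    (hmin : ∀ j, β₀ j ≠ 0 → 2 * γ < |β₀ j|) :
    {j : Fin p | γ < |βhat j|} = {j : Fin p | β₀ j ≠ 0} := by
  ext j
  simp only [Set.mem_setOf_eq]
  constructor
  · intro h hz
    have := hclose j
    rw [hz, sub_zero] at this
    linarith
  · intro h
    have h1 := hclose j
    have h2 := hmin j h
    have : |β₀ j| - |βhat j| ≤ γ := by
      calc |β₀ j| - |βhat j| ≤ |β₀ j - βhat j| := abs_sub_abs_le_abs_sub _ _
        _ = |βhat j - β₀ j| := abs_sub_comm _ _
        _ ≤ γ := h1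
    linarith
end

section
/- Let I be a p×p positive semidefinite matrix, T₀ ⊂ {1,…,p} with |T₀| = S, κ = κ(T₀;I) the compatibility factor, and J another symmetric matrix with ‖I − J‖_∞ ≤ ε. Then for every h in the cone C_{T₀} = {h : ‖h_{T₀ᶜ}‖_1 ≤ ‖h_{T₀}‖_1}: hᵀJh ≥ (κ²/S)‖h_{T₀}‖_1² − 4ε‖h_{T₀}‖_1². -/
open Real

/-- Key deterministic step: lower bound for the perturbed quadratic form on the cone. -/
theorem perturbed_quadratic_lower_bound (p : ℕ) (T₀ : Finset (Fin p)) (S : ℕ)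
    (hS : T₀.card = S) (hSpos : 0 < S)
    (I J : Matrix (Fin p) (Fin p) ℝ)
    (hIsym : ∀ i j, I i j = I j i) (hJsym : ∀ i j, J i j = J j i)
    (hpsd : ∀ h : Fin p → ℝ, 0 ≤ ∑ i, ∑ j, h i * I i j * h j)
    (κ : ℝ)
    (hκ : κ = sInf {x : ℝ | ∃ h : Fin p → ℝ, h ≠ 0 ∧
        (∑ j ∈ T₀ᶜ, |h j|) ≤ (∑ j ∈ T₀, |h j|) ∧
        x = Real.sqrt S * Real.sqrt (∑ i, ∑ j, h i * I i j * h j) / ∑ j ∈ T₀, |h j|})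
    (ε : ℝ) (hε : ∀ i j, |I i j - J i j| ≤ ε) :
    ∀ h : Fin p → ℝ, (∑ j ∈ T₀ᶜ, |h j|) ≤ (∑ j ∈ T₀, |h j|) →
      (κ ^ 2 / S) * (∑ j ∈ T₀, |h j|) ^ 2 - 4 * ε * (∑ j ∈ T₀, |h j|) ^ 2 ≤
        ∑ i, ∑ j, h i * J i j * h j := by
  intro h hcone
  set t := ∑ j ∈ T₀, |h j| with ht
  have htnn : 0 ≤ t := Finset.sum_nonneg fun _ _ => abs_nonneg _
  obtain ⟨i0, hi0⟩ : T₀.Nonempty := Finset.card_pos.mp (by rw [hS]; exact hSpos)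
  have hε0 : 0 ≤ ε := le_trans (abs_nonneg _) (hε i0 i0)
  set L := ∑ j, |h j| with hL
  have hLsplit : L = t + ∑ j ∈ T₀ᶜ, |h j| := (Finset.sum_add_sum_compl T₀ _).symm
  have hcnn : 0 ≤ ∑ j ∈ T₀ᶜ, |h j| := Finset.sum_nonneg fun _ _ => abs_nonneg _
  have hL2t : L ≤ 2 * t := by rw [hLsplit]; linarith
  have hLnn : 0 ≤ L := Finset.sum_nonneg fun _ _ => abs_nonneg _
  set Q := ∑ i, ∑ j, h i * I i j * h j with hQ
  set R := ∑ i, ∑ j, h i * J i j * h j with hR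
  have hQnn : 0 ≤ Q := hpsd h
  have hpert : Q - R ≤ ε * L ^ 2 := by
    have h1 : Q - R = ∑ i, ∑ j, h i * (I i j - J i j) * h j := by
      rw [hQ, hR, ← Finset.sum_sub_distrib]
      refine Finset.sum_congr rfl fun i _ => ?_
      rw [← Finset.sum_sub_distrib]
      exact Finset.sum_congr rfl fun j _ => by ring
    have h2 : ∑ i, ∑ j, h i * (I i j - J i j) * h j ≤ ∑ i, ∑ j, |h i| * ε * |h j| := by
      refine Finset.sum_le_sum fun i _ => Finset.sum_le_sum fun j _ => ?_
      calc h i * (I i j - J i j) * h j ≤ |h i * (I i j - J i j) * h j| := le_abs_self _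
        _ = |h i| * |I i j - J i j| * |h j| := by rw [abs_mul, abs_mul]
        _ ≤ |h i| * ε * |h j| :=
            mul_le_mul_of_nonneg_right
              (mul_le_mul_of_nonneg_left (hε i j) (abs_nonneg _)) (abs_nonneg _)
    have h3 : ∑ i, ∑ j, |h i| * ε * |h j| = ε * L ^ 2 := by
      simp_rw [← Finset.mul_sum, ← Finset.sum_mul, hL]
      ring
    rw [h1, ← h3]; exact h2
  by_cases htz : t = 0
  · have hc0 : ∑ j ∈ T₀ᶜ, |h j| = 0 := le_antisymm (htz ▸ hcone) hcnn
    have hh0 : ∀ j, h j = 0 := by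
      intro j
      have habs : |h j| = 0 := by
        by_cases hj : j ∈ T₀
        · exact (Finset.sum_eq_zero_iff_of_nonneg fun _ _ => abs_nonneg _).mp htz j hj
        · exact (Finset.sum_eq_zero_iff_of_nonneg fun _ _ => abs_nonneg _).mp hc0 j
            (Finset.mem_compl.mpr hj)
      exact abs_eq_zero.mp habs
    have hR0 : R = 0 := by
      rw [hR]
      refine Finset.sum_eq_zero fun i _ => Finset.sum_eq_zero fun j _ => by
        rw [hh0 i]; ring
    rw [hR0, htz]
    norm_num
  · have htpos : 0 < t := lt_of_le_of_ne htnn (Ne.symm htz)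
    have hne : h ≠ 0 := by
      intro heq
      apply htz
      rw [ht, heq]
      simp
    have hbdd : BddBelow {x : ℝ | ∃ h : Fin p → ℝ, h ≠ 0 ∧
        (∑ j ∈ T₀ᶜ, |h j|) ≤ (∑ j ∈ T₀, |h j|) ∧
        x = Real.sqrt S * Real.sqrt (∑ i, ∑ j, h i * I i j * h j) / ∑ j ∈ T₀, |h j|} := by
      refine ⟨0, fun x hx => ?_⟩
      obtain ⟨g, -, -, hxeq⟩ := hx
      rw [hxeq]
      exact div_nonneg (mul_nonneg (Real.sqrt_nonneg _) (Real.sqrt_nonneg _))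
        (Finset.sum_nonneg fun _ _ => abs_nonneg _)
    have hmem : Real.sqrt S * Real.sqrt Q / t ∈ {x : ℝ | ∃ h : Fin p → ℝ, h ≠ 0 ∧
        (∑ j ∈ T₀ᶜ, |h j|) ≤ (∑ j ∈ T₀, |h j|) ∧
        x = Real.sqrt S * Real.sqrt (∑ i, ∑ j, h i * I i j * h j) / ∑ j ∈ T₀, |h j|} :=
      ⟨h, hne, hcone, rfl⟩
    have hκle : κ ≤ Real.sqrt S * Real.sqrt Q / t := by
      rw [hκ]; exact csInf_le hbdd hmem
    have hκ0 : 0 ≤ κ := by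
      rw [hκ]
      refine le_csInf ⟨_, hmem⟩ fun x hx => ?_
      obtain ⟨g, -, -, hxeq⟩ := hx
      rw [hxeq]
      exact div_nonneg (mul_nonneg (Real.sqrt_nonneg _) (Real.sqrt_nonneg _))
        (Finset.sum_nonneg fun _ _ => abs_nonneg _)
    have hSpos' : (0:ℝ) < S := by exact_mod_cast hSpos
    have hsq : (Real.sqrt S * Real.sqrt Q / t) ^ 2 = S * Q / t ^ 2 := by
      rw [div_pow, mul_pow, Real.sq_sqrt (le_of_lt hSpos'), Real.sq_sqrt hQnn]
    have hκ2 : κ ^ 2 ≤ S * Q / t ^ 2 := by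
      rw [← hsq]
      exact pow_le_pow_left₀ hκ0 hκle 2
    have hκt : κ ^ 2 * t ^ 2 ≤ S * Q :=
      (le_div_iff₀ (pow_pos htpos 2)).mp hκ2
    have hκQ : κ ^ 2 / S * t ^ 2 ≤ Q := by
      rw [div_mul_eq_mul_div, div_le_iff₀ hSpos']
      nlinarith
    have hL2 : L * L ≤ 4 * t ^ 2 := by nlinarith
    nlinarith [mul_le_mul_of_nonneg_left hL2 hε0]
end
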